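/- arXiv:2101.09349 — 4 statements merged into one kernel-verified Lean document; each statement's English description precedes it below -/
import Mathlib

section
/- Let a, m be positive integers and let M = {0, 1, ..., m-1} with addition modulo m. There exists a partition M = M₁ ⊔ M₂ with M₂ = {x + a mod m : x ∈ M₁} if and only if m / gcd(a,m) is even. -/
theorem stmt_4 (a m : ℕ) (ha : 1 ≤ a) (hm : 1 ≤ m) :
    (∃ M₁ M₂ : Set (ZMod m), Disjoint M₁ M₂ ∧ M₁ ∪ M₂ = Set.univ ∧
        M₂ = (fun x => x + (a : ZMod m)) '' M₁) ↔
      Even (m / Nat.gcd a m) := by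
  haveI : NeZero m := ⟨by omega⟩
  set α : ZMod m := (a : ZMod m) with hα
  set d := addOrderOf α with hd
  have hdval : d = m / Nat.gcd a m := by
    rw [hd, hα, ZMod.addOrderOf_coe a (by omega), Nat.gcd_comm]
  rw [← hdval]
  constructor
  · rintro ⟨M₁, M₂, hdisj, hunion, himg⟩
    -- key: x + α ∈ M₁ ↔ x ∉ M₁
    have key : ∀ x : ZMod m, x + α ∈ M₁ ↔ x ∉ M₁ := by
      intro x
      constructor
      · intro h hx
        have : x + α ∈ M₂ := by rw [himg]; exact ⟨x, hx, rfl⟩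
        exact (Set.disjoint_left.mp hdisj h) this
      · intro hx
        have hx2 : x ∈ M₂ := by
          have := Set.eq_univ_iff_forall.mp hunion x
          rcases this with h | h
          · exact absurd h hx
          · exact h
        rw [himg] at hx2
        obtain ⟨z, hz, hzx⟩ := hx2
        by_contra h
        have : x + α ∈ M₂ := by
          have := Set.eq_univ_iff_forall.mp hunion (x + α)
          rcases this with h' | h'
          · exact absurd h' h
          · exact h'
        rw [himg] at this
        obtain ⟨w, hw, hwx⟩ := this
        have : w = x := by
          have : w + α = x + α := hwx
          exact add_right_cancel this
        subst this
        exact hx hw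
    have alt : ∀ n : ℕ, ((n • α ∈ M₁) ↔ ((0 : ZMod m) ∈ M₁ ↔ Even n)) := by
      intro n
      induction n with
      | zero => simp
      | succ n ih =>
        have : (n + 1) • α = n • α + α := by rw [succ_nsmul]
        rw [this, key, ih, Nat.even_add_one]
        tauto
    have h0 := alt d
    rw [addOrderOf_nsmul_eq_zero α] at h0
    show Even (addOrderOf α)
    tauto
  · intro hEven
    classical
    set H := AddSubgroup.zmultiples α with hH
    let rep : ZMod m → ZMod m := fun x => (QuotientAddGroup.mk (s := H) x).out
    have hrep : ∀ x : ZMod m, ∃ k : ℤ, x = rep x + k • α := by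
      intro x
      have : QuotientAddGroup.mk (s := H) (rep x) = QuotientAddGroup.mk x :=
        Quotient.out_eq _
      have h2 : -(rep x) + x ∈ H := by
        rwa [QuotientAddGroup.eq] at this
      obtain ⟨k, hk⟩ := AddSubgroup.mem_zmultiples_iff.mp h2
      exact ⟨k, by rw [hk]; exact (add_neg_cancel_left _ _).symm⟩
    have hrep_add : ∀ x : ZMod m, rep (x + α) = rep x := by
      intro x
      have : QuotientAddGroup.mk (s := H) (x + α) = QuotientAddGroup.mk x := by
        rw [QuotientAddGroup.eq]
        have : -(x + α) + x = -α := by abel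
        rw [this]
        exact neg_mem (AddSubgroup.mem_zmultiples α)
      exact congrArg Quotient.out this
    set M₁ : Set (ZMod m) := {x | ∃ k : ℤ, Even k ∧ x = rep x + k • α} with hM₁
    -- membership characterization
    have hchar : ∀ (x : ZMod m) (k : ℤ), x = rep x + k • α → (x ∈ M₁ ↔ Even k) := by
      intro x k hk
      constructor
      · rintro ⟨k', hk', hxk'⟩
        have heq : k' • α = k • α := by
          have := hxk'.symm.trans hk
          exact add_left_cancel this
        have : (k' - k) • α = 0 := by rw [sub_zsmul, heq]; exact add_neg_cancel _
        have hdvd : (d : ℤ) ∣ (k' - k) := by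
          rwa [← addOrderOf_dvd_iff_zsmul_eq_zero] at this
        have h2 : (2 : ℤ) ∣ (k' - k) := by
          obtain ⟨c, hc⟩ := hEven
          refine dvd_trans ⟨c, ?_⟩ hdvd
          push_cast [hc]; ring
        have := Int.even_sub.mp (even_iff_two_dvd.mpr h2)
        exact this.mp hk'
      · intro hk'
        exact ⟨k, hk', hk⟩
    have key : ∀ x : ZMod m, x + α ∈ M₁ ↔ x ∉ M₁ := by
      intro x
      obtain ⟨k, hk⟩ := hrep x
      have h1 : x ∈ M₁ ↔ Even k := hchar x k hk
      have h2 : x + α ∈ M₁ ↔ Even (k + 1) := by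
        apply hchar
        rw [hrep_add]
        conv_lhs => rw [hk]
        rw [add_zsmul, one_zsmul]
        abel
      rw [h1, h2, Int.even_add_one]
    refine ⟨M₁, M₁ᶜ, disjoint_compl_right, Set.union_compl_self M₁, ?_⟩
    ext y
    simp only [Set.mem_compl_iff, Set.mem_image]
    constructor
    · intro hy
      refine ⟨y - α, ?_, by ring⟩
      have h := key (y - α)
      rw [sub_add_cancel] at h
      by_contra hc
      exact hy (h.mpr hc)
    · rintro ⟨x, hx, rfl⟩
      intro h
      exact (key x).mp h hx
end

section
/- Let s, t ≥ 0 be integers and N = s + t + 4. Consider the cyclic quantum code in the 4-parameter family with p = s+1, q = s+3, r = 1 on N qubits, whose number of encoded qubits is K = gcd(p,N)·gcd(q,N)/gcd(lcm(p,q),N). Then K = 2 if both s and t are odd, and K = 1 otherwise. -/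
open scoped Classical in
theorem stmt_6 (s t N p q : ℕ) (hN : N = s + t + 4) (hp : p = s + 1) (hq : q = s + 3) :
    Nat.gcd p N * Nat.gcd q N / Nat.gcd (Nat.lcm p q) N =
      if Odd s ∧ Odd t then 2 else 1 := by
  subst hN hp hq
  rcases Nat.even_or_odd s with hs | hs
  · -- s even: p, q odd and coprime
    obtain ⟨k, rfl⟩ := hs
    have hcop : Nat.Coprime (k + k + 1) (k + k + 3) := by
      have : Nat.gcd (k + k + 1) (k + k + 3) = Nat.gcd (k + k + 1) 2 := by
        have h3 : k + k + 3 = 2 + 1 * (k + k + 1) := by ring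
        rw [h3, Nat.gcd_add_mul_right_right]
      unfold Nat.Coprime
      rw [this, Nat.gcd_comm, Nat.gcd_rec]
      have h2 : (k + k + 1) % 2 = 1 := by omega
      rw [h2, Nat.gcd_one_left]
    have hlcm : Nat.lcm (k + k + 1) (k + k + 3) = (k + k + 1) * (k + k + 3) :=
      Nat.Coprime.lcm_eq_mul hcop
    rw [hlcm]
    have hmul : Nat.gcd ((k + k + 1) * (k + k + 3)) (k + k + t + 4)
        = Nat.gcd (k + k + 1) (k + k + t + 4) * Nat.gcd (k + k + 3) (k + k + t + 4) := by
      rw [Nat.gcd_comm, Nat.Coprime.gcd_mul _ hcop, Nat.gcd_comm (k+k+t+4), Nat.gcd_comm (k+k+t+4)]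
    rw [hmul]
    have h1 : 0 < Nat.gcd (k + k + 1) (k + k + t + 4) := Nat.gcd_pos_of_pos_right _ (by omega)
    have h2 : 0 < Nat.gcd (k + k + 3) (k + k + t + 4) := Nat.gcd_pos_of_pos_right _ (by omega)
    rw [Nat.div_self (Nat.mul_pos h1 h2), if_neg]
    rintro ⟨⟨m, hm⟩, -⟩
    omega
  · obtain ⟨k, rfl⟩ := hs
    have e1 : 2 * k + 1 + 1 = 2 * (k + 1) := by ring
    have e2 : 2 * k + 1 + 3 = 2 * (k + 2) := by ring
    have hcop : Nat.Coprime (k + 1) (k + 2) := by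
      have h12 : k + 2 = 1 + 1 * (k + 1) := by ring
      unfold Nat.Coprime
      rw [h12, Nat.gcd_add_mul_right_right, Nat.gcd_one_right]
    have hlcm : Nat.lcm (2 * k + 1 + 1) (2 * k + 1 + 3) = 2 * ((k + 1) * (k + 2)) := by
      rw [e1, e2, Nat.lcm_mul_left, Nat.Coprime.lcm_eq_mul hcop]
    rcases Nat.even_or_odd t with ht | ht
    · -- t even, N odd: result 1
      have hNodd : Nat.Coprime 2 (2 * k + 1 + t + 4) := by
        obtain ⟨j, rfl⟩ := ht
        unfold Nat.Coprime
        rw [Nat.gcd_rec]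
        have h2 : (2 * k + 1 + (j + j) + 4) % 2 = 1 := by omega
        rw [h2, Nat.gcd_one_left]
      rw [hlcm, e1, e2, Nat.Coprime.gcd_mul_left_cancel _ hNodd,
        Nat.Coprime.gcd_mul_left_cancel _ hNodd, Nat.Coprime.gcd_mul_left_cancel _ hNodd]
      have hmul : Nat.gcd ((k + 1) * (k + 2)) (2 * k + 1 + t + 4)
          = Nat.gcd (k + 1) (2 * k + 1 + t + 4) * Nat.gcd (k + 2) (2 * k + 1 + t + 4) := by
        rw [Nat.gcd_comm, Nat.Coprime.gcd_mul _ hcop, Nat.gcd_comm (2*k+1+t+4), Nat.gcd_comm (2*k+1+t+4)]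
      rw [hmul]
      have h1 : 0 < Nat.gcd (k + 1) (2 * k + 1 + t + 4) := Nat.gcd_pos_of_pos_right _ (by omega)
      have h2 : 0 < Nat.gcd (k + 2) (2 * k + 1 + t + 4) := Nat.gcd_pos_of_pos_right _ (by omega)
      rw [Nat.div_self (Nat.mul_pos h1 h2), if_neg]
      rintro ⟨-, ⟨m, hm⟩⟩
      obtain ⟨j, rfl⟩ := ht
      omega
    · -- t odd, N even: result 2
      obtain ⟨j, rfl⟩ := ht
      have eN : 2 * k + 1 + (2 * j + 1) + 4 = 2 * (k + j + 3) := by ring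
      rw [hlcm, e1, e2, eN, Nat.gcd_mul_left, Nat.gcd_mul_left, Nat.gcd_mul_left]
      have hmul : Nat.gcd ((k + 1) * (k + 2)) (k + j + 3)
          = Nat.gcd (k + 1) (k + j + 3) * Nat.gcd (k + 2) (k + j + 3) := by
        rw [Nat.gcd_comm, Nat.Coprime.gcd_mul _ hcop, Nat.gcd_comm (k+j+3), Nat.gcd_comm (k+j+3)]
      rw [hmul]
      have h1 : 0 < Nat.gcd (k + 1) (k + j + 3) := Nat.gcd_pos_of_pos_right _ (by omega)
      have h2 : 0 < Nat.gcd (k + 2) (k + j + 3) := Nat.gcd_pos_of_pos_right _ (by omega)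
      have key : 2 * Nat.gcd (k + 1) (k + j + 3) * (2 * Nat.gcd (k + 2) (k + j + 3))
          = 2 * (2 * (Nat.gcd (k + 1) (k + j + 3) * Nat.gcd (k + 2) (k + j + 3))) := by ring
      rw [key, Nat.mul_div_cancel _ (by positivity),
        if_pos ⟨⟨k, by ring⟩, ⟨j, by ring⟩⟩]
end

section
/- For every symmetric matrix C ∈ 𝔽₂^{ℓ×ℓ} with zero diagonal, there exist an invertible lower-triangular matrix L ∈ 𝔽₂^{ℓ×ℓ} and a symmetric matrix B ∈ 𝔽₂^{ℓ×ℓ} with zero diagonal having at most a single 1 in each row and column, such that C = L B Lᵀ. -/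
/-!
Induct on the number of nonzero rows of `C`. Let `i` be the first nonzero row and `k` the first
nonzero entry of that row, so `C i k = 1` and `i < k`. Writing `c_j` for the `j`-th row,
equivalently column, of `C`, the matrix `D = C + c_k c_iᵀ + c_i c_kᵀ` is again symmetric with
zero diagonal (in characteristic two), has zero rows `i` and `k`, and keeps every zero row of `C`.
Moreover `C = E (D + e_i e_kᵀ + e_k e_iᵀ) Eᵀ`, where `E` is the identity with columns `i` and `k`
replaced by `c_k` and `c_i`; the minimality of `i` and `k` makes `E` unit lower triangular. If
`D = L B Lᵀ` with `L e_i = e_i`, `L e_k = e_k` and rows `i`, `k` of `B` zero, then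
`C = (E L) B' (E L)ᵀ` with `B' = B + e_i e_kᵀ + e_k e_iᵀ`.
-/

open Matrix Finset

variable {n R : Type*}

def symmOuter [Mul R] [Add R] (u v : n → R) : Matrix n n R :=
  vecMulVec u v + vecMulVec v u

section CommSemiring

variable [CommSemiring R]

theorem symmOuter_apply (u v : n → R) (a b : n) :
    symmOuter u v a b = u a * v b + v a * u b := rfl

theorem transpose_symmOuter (u v : n → R) : (symmOuter u v)ᵀ = symmOuter u v := by
  simp only [symmOuter, transpose_add, transpose_vecMulVec, add_comm]

variable [Fintype n]

theorem mul_symmOuter_mul_transpose (M : Matrix n n R) (u v : n → R) :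
    M * symmOuter u v * Mᵀ = symmOuter (M *ᵥ u) (M *ᵥ v) := by
  simp only [symmOuter, Matrix.mul_add, Matrix.add_mul, mul_vecMulVec, vecMulVec_mul,
    vecMul_transpose]

variable [DecidableEq n]

theorem updateCol_mul_of_row_eq_zero (A : Matrix n n R) {j : n} (c : n → R)
    {M : Matrix n n R} (hM : M j = 0) : A.updateCol j c * M = A * M := by
  ext a b
  simp only [mul_apply]
  refine sum_congr rfl fun m _ => ?_
  by_cases hm : m = j
  · simp [hm, hM]
  · rw [updateCol_ne hm]

end CommSemiring

structure IsMatchingMatrix [Zero R] (B : Matrix n n R) : Prop where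
  transpose_eq : Bᵀ = B
  diag_eq_zero : ∀ i, B i i = 0
  subsingleton_support : ∀ i, (Function.support (B i)).Subsingleton

namespace IsMatchingMatrix

theorem zero [Zero R] : IsMatchingMatrix (0 : Matrix n n R) :=
  ⟨transpose_zero, fun _ => rfl, fun _ =>
    (Function.support_zero (ι := n) (M := R)).symm ▸ Set.subsingleton_empty⟩

theorem subsingleton_support_col [Zero R] {B : Matrix n n R} (hB : IsMatchingMatrix B) (j : n) :
    (Function.support fun i => B i j).Subsingleton := by
  have h := hB.subsingleton_support j
  rw [← hB.transpose_eq] at h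
  exact h

variable [DecidableEq n] [CommSemiring R]

theorem add_symmOuter_single {B : Matrix n n R} (hB : IsMatchingMatrix B) {i k : n}
    (hik : i ≠ k) (hi : B i = 0) (hk : B k = 0) :
    IsMatchingMatrix (B + symmOuter (Pi.single i 1) (Pi.single k 1)) := by
  have hrow : ∀ a, (B + symmOuter (Pi.single i 1) (Pi.single k 1) : Matrix n n R) a =
      if a = i then Pi.single k 1 else if a = k then Pi.single i 1 else B a := by
    intro a
    ext b
    by_cases hai : a = i
    · subst hai; simp [symmOuter_apply, hi, hik]
    · by_cases hak : a = k
      · subst hak; simp [symmOuter_apply, hk, hai]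
      · simp [symmOuter_apply, hai, hak]
  refine ⟨by rw [transpose_add, transpose_symmOuter, hB.transpose_eq], fun a => ?_, fun a => ?_⟩
  · rw [hrow]
    split_ifs with hai hak
    · simp [hai, hik]
    · simp [hak, hik]
    · exact hB.diag_eq_zero a
  · rw [hrow]
    split_ifs
    · exact Set.subsingleton_singleton.anti Pi.support_single_subset
    · exact Set.subsingleton_singleton.anti Pi.support_single_subset
    · exact hB.subsingleton_support a

end IsMatchingMatrix

theorem card_filter_ne_zero_le_one [Fintype n] [Zero R] [DecidableEq R] {f : n → R}
    (hf : (Function.support f).Subsingleton) : (univ.filter fun j => f j ≠ 0).card ≤ 1 :=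
  card_le_one.mpr fun _ ha _ hb => hf (mem_filter.mp ha).2 (mem_filter.mp hb).2

section Reduction

variable [CommRing R]

def reducePair (C : Matrix n n R) (i k : n) : Matrix n n R :=
  C + symmOuter (C k) (C i)

def pairEliminator [DecidableEq n] (C : Matrix n n R) (i k : n) : Matrix n n R :=
  ((1 : Matrix n n R).updateCol i (C k)).updateCol k (C i)

variable {C : Matrix n n R} {i k : n}

theorem reducePair_apply (a b : n) :
    reducePair C i k a b = C a b + (C k a * C i b + C i a * C k b) := rfl

theorem transpose_reducePair (hC : Cᵀ = C) : (reducePair C i k)ᵀ = reducePair C i k := by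
  rw [reducePair, transpose_add, hC, transpose_symmOuter]

theorem reducePair_row_eq_zero (hC : Cᵀ = C) {a : n} (ha : C a = 0) :
    reducePair C i k a = 0 := by
  have hcol : ∀ j, C j a = 0 := fun j => by rw [← hC, transpose_apply, ha, Pi.zero_apply]
  ext b
  rw [reducePair_apply, hcol, hcol, ha]
  simp

variable [CharP R 2]

theorem Matrix.add_self_eq_zero_of_charP_two (M : Matrix n n R) : M + M = 0 := by
  ext
  exact CharTwo.add_self_eq_zero _

theorem one_ne_zero_of_charP_two : (1 : R) ≠ 0 :=
  have : Nontrivial R := CharP.nontrivial_of_char_ne_one (v := 2) (by norm_num)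
  one_ne_zero

theorem ne_of_apply_eq_one (hdiag : ∀ a, C a a = 0) (hik : C i k = 1) : i ≠ k := by
  rintro rfl
  exact one_ne_zero_of_charP_two (hik.symm.trans (hdiag i))

theorem row_ne_zero_left (hik : C i k = 1) : C i ≠ 0 := fun h =>
  one_ne_zero_of_charP_two (by rw [← hik, h, Pi.zero_apply])

theorem row_ne_zero_right (hC : Cᵀ = C) (hik : C i k = 1) : C k ≠ 0 := fun h =>
  one_ne_zero_of_charP_two (by rw [← hik, ← hC, transpose_apply, h, Pi.zero_apply])

theorem reducePair_apply_self {a : n} (hdiag : C a a = 0) : reducePair C i k a a = 0 := by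
  rw [reducePair_apply, hdiag, mul_comm (C i a), CharTwo.add_self_eq_zero, zero_add]

theorem reducePair_row_left (hC : Cᵀ = C) (hii : C i i = 0) (hik : C i k = 1) :
    reducePair C i k i = 0 := by
  have hki : C k i = 1 := by rw [← hC, transpose_apply, hik]
  ext b
  rw [reducePair_apply, hki, hii, one_mul, zero_mul, add_zero, CharTwo.add_self_eq_zero]
  rfl

theorem reducePair_row_right (hkk : C k k = 0) (hik : C i k = 1) :
    reducePair C i k k = 0 := by
  ext b
  rw [reducePair_apply, hkk, hik, one_mul, zero_mul, zero_add, CharTwo.add_self_eq_zero]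
  rfl

theorem ncard_rows_ne_zero_reducePair_lt [Finite n] (hC : Cᵀ = C) (hii : C i i = 0)
    (hik : C i k = 1) :
    {a | reducePair C i k a ≠ 0}.ncard < {a | C a ≠ 0}.ncard := by
  refine Set.ncard_lt_ncard ((Set.ssubset_iff_of_subset fun a ha => ?_).mpr ?_)
  · exact fun h => ha (reducePair_row_eq_zero hC h)
  · exact ⟨i, row_ne_zero_left hik, fun h => h (reducePair_row_left hC hii hik)⟩

end Reduction

section Eliminator

variable [CommRing R] [Fintype n] [DecidableEq n] {C : Matrix n n R} {i k : n}

theorem pairEliminator_mulVec_single_left (hik : i ≠ k) :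
    pairEliminator C i k *ᵥ Pi.single i 1 = C k := by
  ext a
  rw [mulVec_single_one, col_apply, pairEliminator, updateCol_ne hik, updateCol_self]

theorem pairEliminator_mulVec_single_right :
    pairEliminator C i k *ᵥ Pi.single k 1 = C i := by
  ext a
  rw [mulVec_single_one, col_apply, pairEliminator, updateCol_self]

theorem pairEliminator_mulVec_single_of_ne {a : n} (hai : a ≠ i) (hak : a ≠ k) :
    pairEliminator C i k *ᵥ Pi.single a 1 = Pi.single a 1 := by
  ext b
  rw [mulVec_single_one, col_apply, pairEliminator, updateCol_ne hak, updateCol_ne hai, one_apply,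
    Pi.single_apply]

theorem pairEliminator_mul_of_rows_eq_zero {M : Matrix n n R} (hi : M i = 0) (hk : M k = 0) :
    pairEliminator C i k * M = M := by
  rw [pairEliminator, updateCol_mul_of_row_eq_zero _ _ hk, updateCol_mul_of_row_eq_zero _ _ hi,
    Matrix.one_mul]

theorem eq_pairEliminator_mul_mul_transpose [CharP R 2] (hC : Cᵀ = C) (hdiag : ∀ a, C a a = 0)
    (hik : C i k = 1) :
    C = pairEliminator C i k * (reducePair C i k + symmOuter (Pi.single i 1) (Pi.single k 1)) *
      (pairEliminator C i k)ᵀ := by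
  have hne := ne_of_apply_eq_one hdiag hik
  have hED : pairEliminator C i k * reducePair C i k = reducePair C i k :=
    pairEliminator_mul_of_rows_eq_zero (reducePair_row_left hC (hdiag i) hik)
      (reducePair_row_right (hdiag k) hik)
  have hDE : reducePair C i k * (pairEliminator C i k)ᵀ = reducePair C i k := by
    rw [← transpose_reducePair hC, ← transpose_mul, hED]
  rw [Matrix.mul_add, Matrix.add_mul, Matrix.mul_assoc, hDE, hED, mul_symmOuter_mul_transpose,
    pairEliminator_mulVec_single_left hne, pairEliminator_mulVec_single_right, reducePair,
    add_assoc, add_self_eq_zero_of_charP_two, add_zero]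

end Eliminator

section LowerTriangular

variable [CommRing R] [LinearOrder n] {C : Matrix n n R} {i k : n}

theorem pairEliminator_isLowerTriangular (hC : Cᵀ = C) (hbefore : ∀ a < i, C a = 0)
    (hrow : ∀ j < k, C i j = 0) : (pairEliminator C i k).IsLowerTriangular := by
  intro a j (haj : a < j)
  rw [pairEliminator, updateCol_apply, updateCol_apply]
  split_ifs with hjk hji
  · exact hrow a (hjk ▸ haj)
  · rw [← hC, transpose_apply, hbefore a (hji ▸ haj), Pi.zero_apply]
  · exact one_apply_ne haj.ne

theorem pairEliminator_apply_self (hC : Cᵀ = C) (hik : C i k = 1) (a : n) :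
    pairEliminator C i k a a = 1 := by
  rw [pairEliminator, updateCol_apply, updateCol_apply]
  split_ifs with hak hai
  · rw [hak, hik]
  · rw [hai, ← hC, transpose_apply, hik]
  · exact one_apply_eq a

theorem isUnit_pairEliminator [Fintype n] (hC : Cᵀ = C) (hik : C i k = 1)
    (hbefore : ∀ a < i, C a = 0) (hrow : ∀ j < k, C i j = 0) : IsUnit (pairEliminator C i k) := by
  rw [isUnit_iff_isUnit_det, det_of_isLowerTriangular _
    (pairEliminator_isLowerTriangular hC hbefore hrow)]
  simp [pairEliminator_apply_self hC hik]

end LowerTriangular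

structure IsMatchingFactorization [CommRing R] [Fintype n] [LinearOrder n]
    (C L B : Matrix n n R) : Prop where
  isLowerTriangular : L.IsLowerTriangular
  isUnit : IsUnit L
  isMatchingMatrix : IsMatchingMatrix B
  eq_mul_mul_transpose : C = L * B * Lᵀ
  mulVec_single_of_row_eq_zero : ∀ a, C a = 0 → L *ᵥ Pi.single a 1 = Pi.single a 1
  row_eq_zero_of_row_eq_zero : ∀ a, C a = 0 → B a = 0

namespace IsMatchingFactorization

variable [CommRing R] [Fintype n] [LinearOrder n]

theorem zero_one_zero : IsMatchingFactorization (0 : Matrix n n R) 1 0 where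
  isLowerTriangular := blockTriangular_one
  isUnit := isUnit_one
  isMatchingMatrix := .zero
  eq_mul_mul_transpose := by simp
  mulVec_single_of_row_eq_zero _ _ := one_mulVec _
  row_eq_zero_of_row_eq_zero _ _ := rfl

theorem of_reducePair [CharP R 2] {C L B : Matrix n n R} {i k : n} (hC : Cᵀ = C)
    (hdiag : ∀ a, C a a = 0) (hik : C i k = 1) (hbefore : ∀ a < i, C a = 0)
    (hrow : ∀ j < k, C i j = 0) (h : IsMatchingFactorization (reducePair C i k) L B) :
    IsMatchingFactorization C (pairEliminator C i k * L)
      (B + symmOuter (Pi.single i 1) (Pi.single k 1)) := by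
  have hne := ne_of_apply_eq_one hdiag hik
  have hDi := reducePair_row_left hC (hdiag i) hik
  have hDk := reducePair_row_right (hdiag k) hik
  have hne_of_row_eq_zero : ∀ a, C a = 0 → a ≠ i ∧ a ≠ k := fun a ha =>
    ⟨by rintro rfl; exact row_ne_zero_left hik ha,
      by rintro rfl; exact row_ne_zero_right hC hik ha⟩
  refine ⟨(pairEliminator_isLowerTriangular hC hbefore hrow).mul h.isLowerTriangular,
    (isUnit_pairEliminator hC hik hbefore hrow).mul h.isUnit,
    h.isMatchingMatrix.add_symmOuter_single hne (h.row_eq_zero_of_row_eq_zero i hDi)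
      (h.row_eq_zero_of_row_eq_zero k hDk), ?_, fun a ha => ?_, fun a ha => ?_⟩
  · have hP : L * symmOuter (Pi.single i 1) (Pi.single k 1) * Lᵀ =
        symmOuter (Pi.single i 1) (Pi.single k 1) := by
      rw [mul_symmOuter_mul_transpose, h.mulVec_single_of_row_eq_zero i hDi,
        h.mulVec_single_of_row_eq_zero k hDk]
    conv_lhs => rw [eq_pairEliminator_mul_mul_transpose hC hdiag hik,
      h.eq_mul_mul_transpose, ← hP]
    simp only [transpose_mul, Matrix.mul_add, Matrix.add_mul, Matrix.mul_assoc]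
  · obtain ⟨hai, hak⟩ := hne_of_row_eq_zero a ha
    rw [← mulVec_mulVec, h.mulVec_single_of_row_eq_zero a (reducePair_row_eq_zero hC ha),
      pairEliminator_mulVec_single_of_ne hai hak]
  · obtain ⟨hai, hak⟩ := hne_of_row_eq_zero a ha
    ext b
    simp [symmOuter_apply, hai, hak,
      h.row_eq_zero_of_row_eq_zero a (reducePair_row_eq_zero hC ha)]

end IsMatchingFactorization

theorem exists_pivot_of_ne_zero [Finite n] [LinearOrder n] {C : Matrix n n (ZMod 2)}
    (hC : C ≠ 0) : ∃ i k, C i k = 1 ∧ (∀ a < i, C a = 0) ∧ ∀ j < k, C i j = 0 := by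
  obtain ⟨i, hi, hbefore⟩ := wellFounded_lt.has_min {a | C a ≠ 0} (Function.ne_iff.mp hC)
  obtain ⟨k, hk, hrow⟩ := wellFounded_lt.has_min {j | C i j ≠ 0} (Function.ne_iff.mp hi)
  refine ⟨i, k, ?_, fun a ha => ?_, fun j hj => ?_⟩
  · exact (by decide : ∀ x : ZMod 2, x ≠ 0 → x = 1) _ hk
  · by_contra h; exact hbefore a h ha
  · by_contra h; exact hrow j h hj

theorem exists_isMatchingFactorization [Fintype n] [LinearOrder n] (C : Matrix n n (ZMod 2))
    (hC : Cᵀ = C) (hdiag : ∀ a, C a a = 0) : ∃ L B, IsMatchingFactorization C L B := by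
  induction hm : {a | C a ≠ 0}.ncard using Nat.strong_induction_on generalizing C with
  | _ m ih =>
  obtain rfl | hne := eq_or_ne C 0
  · exact ⟨1, 0, .zero_one_zero⟩
  obtain ⟨i, k, hik, hbefore, hrow⟩ := exists_pivot_of_ne_zero hne
  obtain ⟨L, B, h⟩ := ih _ (hm ▸ ncard_rows_ne_zero_reducePair_lt hC (hdiag i) hik)
    (reducePair C i k) (transpose_reducePair hC) (fun a => reducePair_apply_self (hdiag a)) rfl
  exact ⟨_, _, h.of_reducePair hC hdiag hik hbefore hrow⟩

theorem stmt_16 (ℓ : ℕ) (C : Matrix (Fin ℓ) (Fin ℓ) (ZMod 2))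
    (hsymm : Cᵀ = C) (hdiag : ∀ i, C i i = 0) :
    ∃ L B : Matrix (Fin ℓ) (Fin ℓ) (ZMod 2),
      (∀ i j, i < j → L i j = 0) ∧ IsUnit L ∧
      Bᵀ = B ∧ (∀ i, B i i = 0) ∧
      (∀ i, (Finset.univ.filter (fun j => B i j ≠ 0)).card ≤ 1) ∧
      (∀ j, (Finset.univ.filter (fun i => B i j ≠ 0)).card ≤ 1) ∧
      C = L * B * Lᵀ := by
  obtain ⟨L, B, h⟩ := exists_isMatchingFactorization C hsymm hdiag
  refine ⟨L, B, fun i j hij => h.isLowerTriangular hij, h.isUnit,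
    h.isMatchingMatrix.transpose_eq, h.isMatchingMatrix.diag_eq_zero,
    fun i => card_filter_ne_zero_le_one (h.isMatchingMatrix.subsingleton_support i),
    fun j => card_filter_ne_zero_le_one (h.isMatchingMatrix.subsingleton_support_col j),
    h.eq_mul_mul_transpose⟩
end

section
/- Let C ∈ 𝔽₂^{ℓ×ℓ} be symmetric with zero diagonal. A matrix P ∈ 𝔽₂^{ℓ×2n} with P Λ Pᵀ = C, where Λ = [[0, I_n],[I_n, 0]], exists if and only if 2n ≥ rank(C). Moreover, when such a P exists, rank(P) ≥ rank(C). -/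
/-!
Over any field, an alternating matrix `C` with `C i j ≠ 0` splits as `C = C' + a bᵀ - b aᵀ`,
where `a = (C i j)⁻¹ • C.col i`, `b = C.col j`, and `C'` is alternating with rows `i` and `j` zero.
Hence `range C'` and `span {a, b}` are independent subspaces of `range C`, so
`rank C' + 2 ≤ rank C`, and induction writes `C = A Bᵀ - B Aᵀ` with `A`, `B` having `n` columns
as soon as `rank C ≤ 2n`; that is, `C = P J Pᵀ` for `P = [B A]`. Conversely
`rank (P J Pᵀ) ≤ rank P ≤ 2n`. Over `𝔽₂` symmetric means skew-symmetric and `Λ = J`.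
-/

open Matrix Module

theorem Submodule.finrank_add_two_le {K V : Type*} [Field K] [AddCommGroup V] [Module K V]
    [FiniteDimensional K V] {U W : Submodule K V} {x y : V} (hUW : U ≤ W) (hx : x ∈ W)
    (hy : y ∈ W) (hxy : ∀ s t : K, s • x + t • y ∈ U → s = 0 ∧ t = 0) :
    finrank K U + 2 ≤ finrank K W := by
  have hli : LinearIndependent K ![x, y] :=
    LinearIndependent.pair_iff.2 fun s t hst => hxy s t (hst ▸ U.zero_mem)
  have hdisj : U ⊓ span K {x, y} = ⊥ := by
    refine eq_bot_iff.2 fun z ⟨hzU, hz⟩ => ?_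
    obtain ⟨s, t, rfl⟩ := mem_span_pair.1 hz
    obtain ⟨rfl, rfl⟩ := hxy s t hzU
    simp
  have hspan : finrank K (span K {x, y}) = 2 := by
    have h := finrank_span_eq_card hli
    rwa [Matrix.range_cons_cons_empty, Fintype.card_fin] at h
  calc finrank K U + 2 = finrank K ↥(U ⊔ span K {x, y}) := by
        rw [← hspan, ← finrank_sup_add_finrank_inf_eq, hdisj, finrank_bot, add_zero]
    _ ≤ finrank K W := finrank_mono (sup_le hUW (span_le.2 (Set.insert_subset hx (by simpa))))

namespace Matrix

theorem of_vecCons_mul_transpose_of_vecCons {R l m : Type*} [Semiring R] {n : ℕ}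
    (A : Matrix l (Fin n) R) (B : Matrix m (Fin n) R) (a : l → R) (b : m → R) :
    (of fun p => vecCons (a p) (A p)) * (of fun q => vecCons (b q) (B q))ᵀ
      = vecMulVec a b + A * Bᵀ := by
  ext p q
  simp [mul_apply, Fin.sum_univ_succ, vecMulVec_apply]

theorem fromCols_mul_J_mul_transpose {R l m : Type*} [CommRing R] [Fintype l] [DecidableEq l]
    (A B : Matrix m l R) : fromCols A B * J l R * (fromCols A B)ᵀ = B * Aᵀ - A * Bᵀ := by
  simp [J, fromCols_mul_fromBlocks, transpose_fromCols, fromCols_mul_fromRows, sub_eq_add_neg,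
    add_comm]

theorem rank_mul_mul_transpose_le {K l m : Type*} [Field K] [Fintype l] [Fintype m]
    (P : Matrix m l K) (M : Matrix l l K) : (P * M * Pᵀ).rank ≤ P.rank :=
  (rank_mul_le_right _ _).trans (rank_transpose P).le

section Alternating

variable {K m : Type*} [Field K]

def hyperbolicReduction (C : Matrix m m K) (i j : m) : Matrix m m K :=
  C - vecMulVec ((C i j)⁻¹ • C.col i) (C.col j) + vecMulVec (C.col j) ((C i j)⁻¹ • C.col i)

variable {C : Matrix m m K} {i j : m}

theorem eq_hyperbolicReduction_add (C : Matrix m m K) (i j : m) :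
    C = C.hyperbolicReduction i j + vecMulVec ((C i j)⁻¹ • C.col i) (C.col j)
      - vecMulVec (C.col j) ((C i j)⁻¹ • C.col i) := by
  rw [hyperbolicReduction]
  abel

theorem transpose_hyperbolicReduction (hC : Cᵀ = -C) :
    (C.hyperbolicReduction i j)ᵀ = -C.hyperbolicReduction i j := by
  simp only [hyperbolicReduction, transpose_add, transpose_sub, transpose_vecMulVec, hC]
  abel

theorem hyperbolicReduction_apply_self (hdiag : ∀ i, C i i = 0) (p : m) :
    C.hyperbolicReduction i j p p = 0 := by
  simp [hyperbolicReduction, vecMulVec_apply, hdiag, mul_comm]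

theorem hyperbolicReduction_apply_left (hC : Cᵀ = -C) (hdiag : ∀ i, C i i = 0)
    (hij : C i j ≠ 0) (q : m) : C.hyperbolicReduction i j i q = 0 := by
  have hqi : C q i = -C i q := by simpa using congrFun (congrFun hC i) q
  simp [hyperbolicReduction, vecMulVec_apply, hdiag, hqi, hij]

theorem hyperbolicReduction_apply_right (hC : Cᵀ = -C) (hdiag : ∀ i, C i i = 0)
    (hij : C i j ≠ 0) (q : m) : C.hyperbolicReduction i j j q = 0 := by
  have hji : C j i = -C i j := by simpa using congrFun (congrFun hC i) j
  have hqj : C q j = -C j q := by simpa using congrFun (congrFun hC j) q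
  simp [hyperbolicReduction, vecMulVec_apply, hdiag, hji, hqj, hij]

variable [Fintype m] [DecidableEq m]

theorem hyperbolicReduction_eq_mul (C : Matrix m m K) (i j : m) :
    C.hyperbolicReduction i j = C * (1 - vecMulVec (Pi.single i (C i j)⁻¹) (C.col j)
      + vecMulVec (Pi.single j 1) ((C i j)⁻¹ • C.col i)) := by
  simp [hyperbolicReduction, mul_add, mul_sub, mul_vecMulVec, -MulOpposite.op_inv,
    op_smul_eq_smul]

theorem range_mulVecLin_hyperbolicReduction_le (C : Matrix m m K) (i j : m) :
    LinearMap.range (C.hyperbolicReduction i j).mulVecLin ≤ LinearMap.range C.mulVecLin := by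
  rw [hyperbolicReduction_eq_mul, mulVecLin_mul]
  exact LinearMap.range_comp_le_range _ _

theorem col_mem_range_mulVecLin (C : Matrix m m K) (i : m) :
    C.col i ∈ LinearMap.range C.mulVecLin :=
  ⟨Pi.single i 1, mulVec_single_one C i⟩

theorem rank_hyperbolicReduction_add_two_le (hC : Cᵀ = -C) (hdiag : ∀ i, C i i = 0)
    (hij : C i j ≠ 0) : (C.hyperbolicReduction i j).rank + 2 ≤ C.rank := by
  refine Submodule.finrank_add_two_le (range_mulVecLin_hyperbolicReduction_le C i j)
    (Submodule.smul_mem _ (C i j)⁻¹ (C.col_mem_range_mulVecLin i)) (C.col_mem_range_mulVecLin j)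
    fun s t ⟨y, hy⟩ => ?_
  have hji : C j i = -C i j := by simpa using congrFun (congrFun hC i) j
  have hi : (C.hyperbolicReduction i j *ᵥ y) i = 0 := by
    simp [mulVec, dotProduct, hyperbolicReduction_apply_left hC hdiag hij]
  have hj : (C.hyperbolicReduction i j *ᵥ y) j = 0 := by
    simp [mulVec, dotProduct, hyperbolicReduction_apply_right hC hdiag hij]
  rw [← mulVecLin_apply, hy] at hi hj
  exact ⟨by simpa [hdiag, hji, hij] using hj, by simpa [hdiag, hij] using hi⟩

theorem exists_mul_transpose_sub_mul_transpose_eq (hC : Cᵀ = -C) (hdiag : ∀ i, C i i = 0)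
    {n : ℕ} (hrank : C.rank ≤ 2 * n) : ∃ A B : Matrix m (Fin n) K, A * Bᵀ - B * Aᵀ = C := by
  induction n using Nat.strong_induction_on generalizing C with
  | _ n ih =>
  by_cases hC0 : C = 0
  · exact ⟨0, 0, by simp [hC0]⟩
  obtain ⟨i, j, hij⟩ : ∃ i j, C i j ≠ 0 := by
    by_contra! h
    exact hC0 (ext h)
  have hrank' := rank_hyperbolicReduction_add_two_le hC hdiag hij
  obtain ⟨n, rfl⟩ : ∃ n', n = n' + 1 := Nat.exists_eq_add_one.2 (by omega)
  obtain ⟨A, B, hAB⟩ := ih n (by omega) (C := C.hyperbolicReduction i j)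
    (transpose_hyperbolicReduction hC) (hyperbolicReduction_apply_self hdiag) (by omega)
  set a := (C i j)⁻¹ • C.col i
  refine ⟨of fun p => vecCons (a p) (A p), of fun p => vecCons (C.col j p) (B p), ?_⟩
  rw [of_vecCons_mul_transpose_of_vecCons, of_vecCons_mul_transpose_of_vecCons]
  calc _ = (A * Bᵀ - B * Aᵀ) + vecMulVec a (C.col j) - vecMulVec (C.col j) a := by abel
    _ = C := by rw [hAB, ← eq_hyperbolicReduction_add]

theorem exists_mul_J_mul_transpose_eq (hC : Cᵀ = -C) (hdiag : ∀ i, C i i = 0) {n : ℕ}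
    (hrank : C.rank ≤ 2 * n) : ∃ P : Matrix m (Fin n ⊕ Fin n) K, P * J (Fin n) K * Pᵀ = C := by
  obtain ⟨A, B, hAB⟩ := exists_mul_transpose_sub_mul_transpose_eq hC hdiag hrank
  exact ⟨fromCols B A, by rw [fromCols_mul_J_mul_transpose, hAB]⟩

end Alternating

end Matrix

theorem stmt_17 (ℓ n : ℕ) (C : Matrix (Fin ℓ) (Fin ℓ) (ZMod 2))
    (hsymm : Cᵀ = C) (hdiag : ∀ i, C i i = 0) :
    ((∃ P : Matrix (Fin ℓ) (Fin n ⊕ Fin n) (ZMod 2),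
        P * (Matrix.fromBlocks 0 1 1 0 : Matrix (Fin n ⊕ Fin n) (Fin n ⊕ Fin n) (ZMod 2)) * Pᵀ = C) ↔ C.rank ≤ 2 * n) ∧
    ∀ P : Matrix (Fin ℓ) (Fin n ⊕ Fin n) (ZMod 2),
      P * (Matrix.fromBlocks 0 1 1 0 : Matrix (Fin n ⊕ Fin n) (Fin n ⊕ Fin n) (ZMod 2)) * Pᵀ = C → C.rank ≤ P.rank := by
  have hJ : (fromBlocks 0 1 1 0 : Matrix (Fin n ⊕ Fin n) (Fin n ⊕ Fin n) (ZMod 2))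
      = J (Fin n) (ZMod 2) := by
    rw [J, ZModModule.neg_eq_self]
  have hC : Cᵀ = -C := by rw [hsymm, ZModModule.neg_eq_self]
  have hrank (P : Matrix (Fin ℓ) (Fin n ⊕ Fin n) (ZMod 2)) (hP : P * fromBlocks 0 1 1 0 * Pᵀ = C) :
      C.rank ≤ P.rank := hP ▸ rank_mul_mul_transpose_le P _
  refine ⟨⟨fun ⟨P, hP⟩ => ?_, fun h => hJ ▸ exists_mul_J_mul_transpose_eq hC hdiag h⟩, hrank⟩
  calc C.rank ≤ P.rank := hrank P hP
    _ ≤ Fintype.card (Fin n ⊕ Fin n) := rank_le_card_width P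
    _ = 2 * n := by simp [two_mul]
end
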